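/- arXiv:1304.5511 — 7 statements merged into one kernel-verified Lean document; each statement's English description precedes it below -/
import Mathlib

section
/- Let K be a compact subset of the unit circle T with positive one-dimensional Lebesgue measure. If f and g are continuous functions on the closed unit disc, holomorphic on the open unit disc, and f = g on K, then f = g on the whole closed disc. -/
/-!
Put `h = f - g`; it vanishes on a set `A` of positive measure of the unit circle. First, `h 0 = 0`:
given `ε > 0`, uniform continuity gives `N` such that, for every `ζ` on the circle, `‖h‖ < ε` at
each of the points `ζ ωᵏ` (`ω = exp (2πi / N)`) that lie within angle `2π / N` of `A`. The arcs
of length `4π / N` around these points cover `A`, so there are at least `|A| N / 4π` of them.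
Hence `F z = ∏ₖ h (ωᵏ z)` is bounded on the circle by `ε ^ (|A| N / 4π) * M ^ N`, where `M`
bounds `h`, and the maximum principle at `F 0 = h 0 ^ N` gives `‖h 0‖ ≤ ε ^ (|A| / 4π) * M`;
let `ε → 0`. Second, if `h` did not vanish near `0`, dividing it by `z ^ n`, `n` its order
at `0`, would give a function of the same kind that vanishes on `A` but not at `0`.
-/

open Complex Metric Set MeasureTheory Finset

namespace AddCircle

variable {T : ℝ} [hT : Fact (0 < T)]

theorem exists_dist_add_nsmul_lt {N : ℕ} (hN : 0 < N) (x y : AddCircle T) :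
    ∃ k < N, dist y (x + k • ((T / N : ℝ) : AddCircle T)) < T / N := by
  obtain ⟨t, ht⟩ := QuotientAddGroup.mk_surjective (y - x)
  have hs : 0 < T / N := div_pos hT.out (Nat.cast_pos.mpr hN)
  set m : ℤ := ⌊t / (T / N)⌋
  have hNz : (N : ℤ) ≠ 0 := by exact_mod_cast hN.ne'
  have hk : ((m % N).toNat : ℝ) = m - N * (m / N : ℤ) := by
    rw [← Int.cast_natCast, Int.toNat_of_nonneg (Int.emod_nonneg m hNz), Int.emod_def]
    push_cast; ring
  refine ⟨(m % N).toNat, by have := Int.emod_lt_of_pos m (Int.natCast_pos.mpr hN); omega, ?_⟩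
  rw [← AddCircle.coe_nsmul, nsmul_eq_mul]
  have hcoe : (((m % N).toNat * (T / N) : ℝ) : AddCircle T) =
      ((m * (T / N) : ℝ) : AddCircle T) := by
    rw [hk, show ((m : ℝ) - N * (m / N : ℤ)) * (T / N) = m * (T / N) - (m / N : ℤ) • T by
      rw [zsmul_eq_mul]; field_simp]
    rw [AddCircle.coe_sub, AddCircle.coe_zsmul, AddCircle.coe_period, smul_zero, sub_zero]
  rw [dist_eq_norm, hcoe, ← sub_sub, ← ht, ← AddCircle.coe_sub]
  calc ‖((t - m * (T / N) : ℝ) : AddCircle T)‖ ≤ ‖t - m * (T / N)‖ :=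
        QuotientAddGroup.norm_mk_le_norm
    _ = Int.fract (t / (T / N)) * (T / N) := by
      have hfract : t - m * (T / N) = Int.fract (t / (T / N)) * (T / N) := by
        rw [Int.fract, sub_mul, div_mul_cancel₀ _ hs.ne']
      rw [Real.norm_eq_abs, hfract, abs_of_nonneg (by positivity)]
    _ < T / N := mul_lt_of_lt_one_left hs (Int.fract_lt_one _)

theorem volume_le_card_mul {N : ℕ} (hN : 0 < N) (x : AddCircle T) {A : Set (AddCircle T)}
    {G : Finset ℕ}
    (hG : ∀ y ∈ A, ∀ k < N, dist y (x + k • ((T / N : ℝ) : AddCircle T)) < T / N → k ∈ G) :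
    volume A ≤ G.card * ENNReal.ofReal (2 * (T / N)) :=
  calc volume A
      ≤ volume (⋃ k ∈ G, ball (x + k • ((T / N : ℝ) : AddCircle T)) (T / N)) := by
        refine measure_mono fun y hy => ?_
        obtain ⟨k, hk, hdist⟩ := exists_dist_add_nsmul_lt hN x y
        exact mem_iUnion₂.mpr ⟨k, hG y hy k hk hdist, hdist⟩
    _ ≤ ∑ k ∈ G, volume (ball (x + k • ((T / N : ℝ) : AddCircle T)) (T / N)) :=
        measure_biUnion_finset_le _ _
    _ ≤ ∑ _k ∈ G, ENNReal.ofReal (2 * (T / N)) := Finset.sum_le_sum fun k _ =>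
        (measure_mono ball_subset_closedBall).trans <|
          (volume_closedBall T (T / N)).trans_le <| ENNReal.ofReal_le_ofReal (min_le_right _ _)
    _ = G.card * ENNReal.ofReal (2 * (T / N)) := by rw [Finset.sum_const, nsmul_eq_mul]

theorem volume_preimage_coe_eq_zero {B : Set (AddCircle T)} (hB : volume B = 0) :
    volume (((↑) : ℝ → AddCircle T) ⁻¹' B) = 0 := by
  have hcover : ((↑) : ℝ → AddCircle T) ⁻¹' B ⊆
      ⋃ n : ℤ, ((↑) : ℝ → AddCircle T) ⁻¹' B ∩ Ioc (n • T) (n • T + T) := by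
    intro t ht
    obtain ⟨n, hn⟩ := mem_iUnion.mp ((iUnion_Ioc_add_zsmul hT.out 0).ge (mem_univ t))
    rw [zero_add, zero_add, add_one_zsmul] at hn
    exact mem_iUnion.mpr ⟨n, ht, hn⟩
  refine measure_mono_null hcover (measure_iUnion_null fun n => ?_)
  rw [← Measure.restrict_apply' measurableSet_Ioc]
  exact (AddCircle.measurePreserving_mk T (n • T)).quasiMeasurePreserving.preimage_null hB

theorem toCircle_surjective : Function.Surjective (@toCircle T) := by
  intro ζ
  obtain ⟨x, hx⟩ := (homeomorphCircle hT.out.ne').surjective ζ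
  exact ⟨x, by rwa [← homeomorphCircle_apply hT.out.ne']⟩

theorem exists_volume_toReal_mul_le_card_filter {E : Type*} [SeminormedAddCommGroup E]
    {H : AddCircle T → E} (hH : Continuous H) {A : Set (AddCircle T)} (hA : ∀ y ∈ A, H y = 0)
    {ε : ℝ} (hε : 0 < ε) :
    ∃ N : ℕ, 0 < N ∧ ∀ x : AddCircle T, (volume A).toReal * N ≤
      2 * T * #{k ∈ range N | ‖H (x + k • ((T / N : ℝ) : AddCircle T))‖ < ε} := by
  obtain ⟨ρ, hρ, hHρ⟩ := Metric.uniformContinuous_iff.mp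
    (CompactSpace.uniformContinuous_of_continuous hH) ε hε
  obtain ⟨N, hNρ⟩ := exists_nat_gt (T / ρ)
  have hN : (0 : ℝ) < N := (div_pos hT.out hρ).trans hNρ
  have hsρ : T / N < ρ := by rwa [div_lt_comm₀ hN hρ]
  refine ⟨N, Nat.cast_pos.mp hN, fun x => ?_⟩
  have hvol := volume_le_card_mul (Nat.cast_pos.mp hN) x (A := A) fun y hy k hk hdist =>
    mem_filter.mpr ⟨mem_range.mpr hk, by
      simpa [hA y hy, dist_eq_norm] using hHρ (hdist.trans hsρ)⟩
  replace hvol := ENNReal.toReal_mono (by finiteness) hvol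
  rw [ENNReal.toReal_mul, ENNReal.toReal_ofReal (by have := hT.out; positivity),
    ENNReal.toReal_natCast] at hvol
  calc (volume A).toReal * N ≤ _ * (2 * (T / N)) * N := by gcongr
    _ = _ := by field_simp

end AddCircle

open AddCircle

section DSlope

variable {E : Type*} [NormedAddCommGroup E] [NormedSpace ℂ E] [CompleteSpace E] {f : ℂ → E}
  {s : Set ℂ} {a : ℂ}

theorem DiffContOnCl.dslope (hf : DiffContOnCl ℂ f s) (hs : s ∈ nhds a) :
    DiffContOnCl ℂ (_root_.dslope f a) s :=
  ⟨(differentiableOn_dslope hs).mpr hf.1,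
    (continuousOn_dslope (Filter.mem_of_superset hs subset_closure)).mpr
      ⟨hf.2, hf.differentiableAt' hs⟩⟩

theorem DiffContOnCl.iterate_dslope (hf : DiffContOnCl ℂ f s) (hs : s ∈ nhds a) (n : ℕ) :
    DiffContOnCl ℂ ((Function.swap _root_.dslope a)^[n] f) s := by
  induction n with
  | zero => exact hf
  | succ n ih => rw [Function.iterate_succ_apply']; exact ih.dslope hs

end DSlope

theorem Finset.prod_le_pow_mul_pow {ι : Type*} {u G : Finset ι} (hG : G ⊆ u) {a : ι → ℝ}
    {ε M : ℝ} {m : ℕ} (ha : ∀ i ∈ u, 0 ≤ a i) (haε : ∀ i ∈ G, a i ≤ ε) (haM : ∀ i ∈ u, a i ≤ M)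
    (hm : m ≤ G.card) (hε0 : 0 ≤ ε) (hε1 : ε ≤ 1) (hM : 1 ≤ M) :
    ∏ i ∈ u, a i ≤ ε ^ m * M ^ u.card := by
  classical
  rw [← Finset.prod_sdiff hG, mul_comm (ε ^ m)]
  have hsdiff : ∏ i ∈ u \ G, a i ≤ M ^ (u \ G).card := by
    simpa using Finset.prod_le_prod (fun i hi => ha i (Finset.sdiff_subset hi))
      fun i hi => haM i (Finset.sdiff_subset hi)
  have hgood : ∏ i ∈ G, a i ≤ ε ^ G.card := by
    simpa using Finset.prod_le_prod (fun i hi => ha i (hG hi)) haε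
  gcongr
  · exact Finset.prod_nonneg fun i hi => ha i (hG hi)
  · exact hsdiff.trans (pow_le_pow_right₀ hM (Finset.card_le_card Finset.sdiff_subset))
  · exact hgood.trans (pow_le_pow_of_le_one hε0 hε1 hm)

theorem norm_pow_card_le_of_forall_circle {h : ℂ → ℂ} (hh : DiffContOnCl ℂ h (ball 0 1))
    {ι : Type*} (u : Finset ι) (c : ι → Circle) {ε M : ℝ} {m : ℕ}
    (hM : ∀ z ∈ closedBall (0 : ℂ) 1, ‖h z‖ ≤ M) (hε0 : 0 ≤ ε) (hε1 : ε ≤ 1) (hM1 : 1 ≤ M)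
    (hgood : ∀ ζ : Circle, ∃ G ⊆ u, m ≤ G.card ∧ ∀ i ∈ G, ‖h (c i * ζ : Circle)‖ ≤ ε) :
    ‖h 0‖ ^ u.card ≤ ε ^ m * M ^ u.card := by
  have hrot : ∀ i, DiffContOnCl ℂ (fun z => h (c i * z)) (ball 0 1) := fun i =>
    hh.comp (differentiable_id.const_mul _).diffContOnCl fun z hz => by
      simpa [Circle.norm_coe] using hz
  have hprod : DiffContOnCl ℂ (fun z => ∏ i ∈ u, h (c i * z)) (ball 0 1) :=
    ⟨DifferentiableOn.fun_finsetProd fun i _ => (hrot i).1,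
      continuousOn_finsetProd _ fun i _ => (hrot i).2⟩
  have hprod0 : ∏ i ∈ u, h (c i * 0) = h 0 ^ u.card := by simp
  rw [← norm_pow, ← hprod0]
  refine norm_le_of_forall_mem_frontier_norm_le isBounded_ball hprod (fun z hz => ?_)
    (subset_closure (mem_ball_self one_pos))
  rw [frontier_ball 0 one_ne_zero] at hz
  obtain ⟨G, hGu, hm, hGε⟩ := hgood ⟨z, hz⟩
  rw [norm_prod]
  exact Finset.prod_le_pow_mul_pow hGu (fun _ _ => norm_nonneg _) hGε
    (fun i _ => hM _ (by simpa [Circle.norm_coe] using hz.le)) hm hε0 hε1 hM1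

section DiscAlgebra

variable {T : ℝ} [hT : Fact (0 < T)] {h : ℂ → ℂ} {A : Set (AddCircle T)}

theorem norm_apply_zero_le_rpow_mul (hh : DiffContOnCl ℂ h (ball 0 1))
    (hzero : ∀ x ∈ A, h (toCircle x) = 0) {M ε : ℝ}
    (hM : ∀ z ∈ closedBall (0 : ℂ) 1, ‖h z‖ ≤ M) (hM1 : 1 ≤ M) (hε0 : 0 < ε) (hε1 : ε ≤ 1) :
    ‖h 0‖ ≤ ε ^ ((volume A).toReal / (2 * T)) * M := by
  have hH : Continuous fun x : AddCircle T => h (toCircle x) :=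
    hh.continuousOn_ball.comp_continuous (by fun_prop) fun x => by simp [Circle.norm_coe]
  obtain ⟨N, hN, hcount⟩ := exists_volume_toReal_mul_le_card_filter hH hzero hε0
  set β := (volume A).toReal / (2 * T)
  have hgood : ∀ ζ : Circle, ∃ G ⊆ range N, ⌈β * N⌉₊ ≤ G.card ∧
      ∀ k ∈ G, ‖h (toCircle (k • ((T / N : ℝ) : AddCircle T)) * ζ : Circle)‖ ≤ ε := by
    intro ζ
    obtain ⟨x, rfl⟩ := toCircle_surjective (T := T) ζ
    refine ⟨{k ∈ range N | ‖h (toCircle (x + k • ((T / N : ℝ) : AddCircle T)))‖ < ε},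
      filter_subset _ _, Nat.ceil_le.mpr ?_, fun k hk => ?_⟩
    · rw [div_mul_eq_mul_div, div_le_iff₀ (by have := hT.out; positivity)]
      linarith [hcount x]
    · rw [← toCircle_add, add_comm]
      exact (mem_filter.mp hk).2.le
  have hpow : ‖h 0‖ ^ N ≤ ε ^ ⌈β * N⌉₊ * M ^ N := by
    simpa using norm_pow_card_le_of_forall_circle hh (range N) _ hM hε0.le hε1 hM1 hgood
  have hε : ε ^ ⌈β * N⌉₊ ≤ (ε ^ β) ^ N := by
    rw [← Real.rpow_natCast, ← Real.rpow_mul_natCast hε0.le]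
    exact Real.rpow_le_rpow_of_exponent_ge hε0 hε1 (Nat.le_ceil _)
  refine (pow_le_pow_iff_left₀ (norm_nonneg _) (by positivity) hN.ne').mp ?_
  rw [mul_pow]
  exact hpow.trans (by gcongr)

theorem apply_zero_eq_zero_of_volume_pos (hh : DiffContOnCl ℂ h (ball 0 1))
    (hA : 0 < volume A) (hzero : ∀ x ∈ A, h (toCircle x) = 0) : h 0 = 0 := by
  obtain ⟨M, hM⟩ := (isCompact_closedBall (0 : ℂ) 1).exists_bound_of_continuousOn
    hh.continuousOn_ball
  have hβ : 0 < (volume A).toReal / (2 * T) :=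
    div_pos (ENNReal.toReal_pos hA.ne' (measure_ne_top _ _)) (by have := hT.out; positivity)
  have hlim : Filter.Tendsto (fun ε : ℝ => ε ^ ((volume A).toReal / (2 * T)) * max M 1)
      (nhdsWithin 0 (Ioi 0)) (nhds 0) := by
    simpa [Real.zero_rpow hβ.ne'] using
      ((Real.continuousAt_rpow_const 0 _ (Or.inr hβ.le)).tendsto.mul_const (max M 1)).mono_left
        nhdsWithin_le_nhds
  refine norm_le_zero_iff.mp (ge_of_tendsto hlim ?_)
  filter_upwards [Ioo_mem_nhdsGT one_pos] with ε hε
  exact norm_apply_zero_le_rpow_mul hh hzero (fun z hz => (hM z hz).trans (le_max_left _ _))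
    (le_max_right _ _) hε.1 hε.2.le

theorem eqOn_zero_of_volume_pos (hh : DiffContOnCl ℂ h (ball 0 1)) (hA : 0 < volume A)
    (hzero : ∀ x ∈ A, h (toCircle x) = 0) : EqOn h 0 (closedBall 0 1) := by
  have han : AnalyticOnNhd ℂ h (ball 0 1) := hh.differentiableOn.analyticOnNhd isOpen_ball
  obtain ⟨p, hp⟩ := han 0 (mem_ball_self one_pos)
  have hlocal : h =ᶠ[nhds 0] 0 := by
    by_contra hne
    refine hp.iterate_dslope_fslope_ne_zero (mt hp.locally_zero_iff.mpr hne) <|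
      apply_zero_eq_zero_of_volume_pos (hh.iterate_dslope (ball_mem_nhds 0 one_pos) _) hA
        fun x hx => ?_
    have hfactor := hp.eq_pow_order_mul_iterate_dslope (toCircle x)
    rw [hzero x hx, sub_zero, smul_eq_mul, eq_comm, mul_eq_zero] at hfactor
    exact hfactor.resolve_left (pow_ne_zero _ (Circle.coe_ne_zero _))
  have hball : EqOn h 0 (ball 0 1) :=
    han.eqOn_zero_of_preconnected_of_eventuallyEq_zero (convex_ball 0 1).isPreconnected
      (mem_ball_self one_pos) hlocal
  exact hball.of_subset_closure hh.continuousOn_ball continuousOn_const ball_subset_closedBall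
    (closure_ball 0 one_ne_zero).ge

end DiscAlgebra

instance fact_two_pi_pos : Fact (0 < 2 * Real.pi) := ⟨Real.two_pi_pos⟩

theorem stmt0_general (K : Set ℂ)
    (hpos : 0 < MeasureTheory.volume {θ : ℝ | Complex.exp (θ * Complex.I) ∈ K})
    (f g : ℂ → ℂ)
    (hf : ContinuousOn f (closedBall (0 : ℂ) 1))
    (hf' : DifferentiableOn ℂ f (ball (0 : ℂ) 1))
    (hg : ContinuousOn g (closedBall (0 : ℂ) 1))
    (hg' : DifferentiableOn ℂ g (ball (0 : ℂ) 1))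
    (hfg : EqOn f g K) :
    EqOn f g (closedBall (0 : ℂ) 1) := by
  set A : Set (AddCircle (2 * Real.pi)) := {x | (toCircle x : ℂ) ∈ K}
  have hpreimage :
      ((↑) : ℝ → AddCircle (2 * Real.pi)) ⁻¹' A = {θ : ℝ | exp (θ * I) ∈ K} := by
    ext θ
    simp [A, toCircle_apply_mk, Real.pi_ne_zero]
  have hA : 0 < volume A :=
    pos_iff_ne_zero.mpr fun h0 => hpos.ne' (hpreimage ▸ volume_preimage_coe_eq_zero h0)
  have hh : DiffContOnCl ℂ (f - g) (ball 0 1) :=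
    (DiffContOnCl.mk_ball hf' hf).sub (DiffContOnCl.mk_ball hg' hg)
  exact fun z hz => sub_eq_zero.mp <|
    eqOn_zero_of_volume_pos hh hA (fun x hx => sub_eq_zero.mpr (hfg hx)) hz

/-- A compact subset of the unit circle with positive arc-length measure is a
set of uniqueness for the disc algebra. -/
theorem stmt0 (K : Set ℂ) (hKc : IsCompact K) (hKT : K ⊆ sphere (0 : ℂ) 1)
    (hpos : 0 < MeasureTheory.volume {θ : ℝ | Complex.exp (θ * Complex.I) ∈ K})
    (f g : ℂ → ℂ)
    (hf : ContinuousOn f (closedBall (0 : ℂ) 1))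
    (hf' : DifferentiableOn ℂ f (ball (0 : ℂ) 1))
    (hg : ContinuousOn g (closedBall (0 : ℂ) 1))
    (hg' : DifferentiableOn ℂ g (ball (0 : ℂ) 1))
    (hfg : EqOn f g K) :
    EqOn f g (closedBall (0 : ℂ) 1) :=
  stmt0_general K hpos f g hf hf' hg hg' hfg
end

section
/- The function f(z) = 1/(1−z), defined on the closed unit disc with f(1) = ∞, is a uniform limit of polynomials on D̄ with respect to the chordal metric χ, but is not a uniform limit of polynomials on D̄ with respect to the Euclidean metric on ℂ. -/
open Complex Metric Set Filter Polynomial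

/-!
The chordal metric is invariant under `w ↦ 1/w`, and it is dominated by the Euclidean distance
of reciprocals; so it suffices to make `1 / p` uniformly close to `1 - z`. The damped geometric
sums `p(z) = ∑_{i<k} (rz)^i` satisfy `1 / p(z) = (1 - rz) / (1 - (rz)^k)`, which is uniformly
within `2 (1 - r + 2 r^k)` of `1 - z` on the disc. In the Euclidean metric no polynomial can even
come within distance `1`, since polynomials are bounded on the compact disc while `1/(1-z)` is not.
-/

/-- The chordal metric on the Riemann sphere `ℂ ∪ {∞}`, modeled as `OnePoint ℂ`
(`∞ = OnePoint.infty`). -/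
noncomputable def chi : OnePoint ℂ → OnePoint ℂ → ℝ := fun a b =>
  match a, b with
  | (some a : Option ℂ), (some b : Option ℂ) =>
      ‖a - b‖ / (Real.sqrt (1 + ‖a‖ ^ 2) * Real.sqrt (1 + ‖b‖ ^ 2))
  | (some a : Option ℂ), (none : Option ℂ) => 1 / Real.sqrt (1 + ‖a‖ ^ 2)
  | (none : Option ℂ), (some b : Option ℂ) => 1 / Real.sqrt (1 + ‖b‖ ^ 2)
  | (none : Option ℂ), (none : Option ℂ) => 0

/-- The function `f(z) = 1/(1-z)` on the closed unit disc, with `f(1) = ∞`. -/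
noncomputable def fext : ℂ → OnePoint ℂ := fun z =>
  if z = 1 then OnePoint.infty else ((1 - z)⁻¹ : ℂ)

lemma norm_le_sqrt_one_add_sq (a : ℂ) : ‖a‖ ≤ √(1 + ‖a‖ ^ 2) :=
  (Real.le_sqrt (norm_nonneg a) (by positivity)).2 (by linarith)

lemma chi_coe_coe_le {a b : ℂ} (ha : a ≠ 0) (hb : b ≠ 0) :
    chi (a : OnePoint ℂ) (b : OnePoint ℂ) ≤ ‖a⁻¹ - b⁻¹‖ := by
  change ‖a - b‖ / (√(1 + ‖a‖ ^ 2) * √(1 + ‖b‖ ^ 2)) ≤ _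
  rw [inv_sub_inv ha hb, norm_div, norm_sub_rev, norm_mul]
  gcongr
  · exact norm_le_sqrt_one_add_sq a
  · exact norm_le_sqrt_one_add_sq b

lemma chi_coe_infty_le {a : ℂ} (ha : a ≠ 0) :
    chi (a : OnePoint ℂ) OnePoint.infty ≤ ‖a⁻¹‖ := by
  change 1 / √(1 + ‖a‖ ^ 2) ≤ _
  rw [norm_inv, ← one_div]
  have ha' : 0 < ‖a‖ := norm_pos_iff.2 ha
  gcongr
  exact norm_le_sqrt_one_add_sq a

lemma chi_fext_le {a : ℂ} (ha : a ≠ 0) (z : ℂ) :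
    chi (a : OnePoint ℂ) (fext z) ≤ ‖a⁻¹ - (1 - z)‖ := by
  by_cases hz : z = 1
  · simpa [fext, hz] using chi_coe_infty_le ha
  · have hz' : (1 - z : ℂ) ≠ 0 := sub_ne_zero.2 (Ne.symm hz)
    simpa [fext, hz] using chi_coe_coe_le ha (inv_ne_zero hz')

noncomputable def dampedGeomSum (r : ℂ) (k : ℕ) : ℂ[X] := ∑ i ∈ Finset.range k, (C r * X) ^ i

lemma one_sub_mul_eval_dampedGeomSum (r : ℂ) (k : ℕ) (z : ℂ) :
    (1 - r * z) * (dampedGeomSum r k).eval z = 1 - (r * z) ^ k := by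
  simp only [dampedGeomSum, eval_finsetSum, eval_pow, eval_mul, eval_C, eval_X, mul_neg_geom_sum]

lemma norm_inv_eval_dampedGeomSum_sub_le {r : ℝ} {k : ℕ} {z : ℂ} (hr₀ : 0 ≤ r) (hr₁ : r ≤ 1)
    (hk : r ^ k ≤ 1 / 2) (hz : ‖z‖ ≤ 1) :
    (dampedGeomSum r k).eval z ≠ 0 ∧
      ‖((dampedGeomSum r k).eval z)⁻¹ - (1 - z)‖ ≤ 2 * (1 - r + 2 * r ^ k) := by
  set w : ℂ := (r * z) ^ k
  have hw : ‖w‖ ≤ r ^ k := by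
    rw [norm_pow, norm_mul, norm_real, Real.norm_of_nonneg hr₀]
    exact pow_le_pow_left₀ (by positivity) (mul_le_of_le_one_right hr₀ hz) k
  have hw' : 1 / 2 ≤ ‖1 - w‖ := by linarith [norm_sub_norm_le (1 : ℂ) w, norm_one (α := ℂ)]
  have hw₀ : 1 - w ≠ 0 := norm_pos_iff.1 (by linarith)
  have hmul := one_sub_mul_eval_dampedGeomSum r k z
  have hp : (dampedGeomSum r k).eval z ≠ 0 := fun h ↦ hw₀ (by rw [← hmul, h, mul_zero])
  refine ⟨hp, ?_⟩
  have hr : (1 - r * z) / (1 - w) - (1 - z) = ((1 - r) * z + (1 - z) * w) / (1 - w) := by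
    field_simp
    ring
  have hnum : ‖(1 - r) * z + (1 - z) * w‖ ≤ 1 - r + 2 * r ^ k := by
    have h1r : ‖(1 - r : ℂ)‖ = 1 - r := by
      rw [← ofReal_one, ← ofReal_sub, norm_real, Real.norm_of_nonneg (by linarith)]
    calc ‖(1 - r) * z + (1 - z) * w‖ ≤ (1 - r) * ‖z‖ + (1 + ‖z‖) * ‖w‖ := by
          grw [norm_add_le, norm_mul, norm_mul, h1r, norm_sub_le, norm_one]
      _ ≤ 1 - r + 2 * r ^ k := by
          gcongr
          · exact mul_le_of_le_one_right (by linarith) hz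
          · linarith
  have hinv : ((dampedGeomSum r k).eval z)⁻¹ = (1 - r * z) / (1 - w) := by
    rw [eq_div_iff hw₀, ← hmul]
    field_simp
  calc ‖((dampedGeomSum r k).eval z)⁻¹ - (1 - z)‖
      = ‖(1 - r) * z + (1 - z) * w‖ / ‖1 - w‖ := by rw [hinv, hr, norm_div]
    _ ≤ (1 - r + 2 * r ^ k) / (1 / 2) := by gcongr
    _ = 2 * (1 - r + 2 * r ^ k) := by ring

lemma exists_polynomial_chi_fext_lt {ε : ℝ} (hε : 0 < ε) :
    ∃ q : ℂ[X], ∀ z ∈ closedBall (0 : ℂ) 1, chi (q.eval z : ℂ) (fext z) < ε := by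
  set r : ℝ := 1 - min (ε / 4) 1
  have hr₀ : 0 ≤ r := by simp [r]
  have hr₁ : r < 1 := by simp [r, hε]
  obtain ⟨k, hk⟩ := exists_pow_lt_of_lt_one
    (show (0 : ℝ) < min (ε / 8) (1 / 2) by positivity) hr₁
  have hk₁ : r ^ k < ε / 8 := hk.trans_le (min_le_left _ _)
  have hk₂ : r ^ k ≤ 1 / 2 := hk.le.trans (min_le_right _ _)
  refine ⟨dampedGeomSum r k, fun z hz ↦ ?_⟩
  obtain ⟨hp, hbound⟩ :=
    norm_inv_eval_dampedGeomSum_sub_le hr₀ hr₁.le hk₂ (mem_closedBall_zero_iff.1 hz)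
  have hδ : 1 - r ≤ ε / 4 := by simp [r]
  calc chi _ (fext z) ≤ _ := chi_fext_le hp z
    _ ≤ 2 * (1 - r + 2 * r ^ k) := hbound
    _ < ε := by linarith

lemma exists_seq_forall_lt_of_forall_exists_lt {β α : Type*} {s : Set α} {D : β → α → ℝ}
    (h : ∀ ε > 0, ∃ q, ∀ x ∈ s, D q x < ε) :
    ∃ q : ℕ → β, ∀ ε > 0, ∃ N, ∀ n ≥ N, ∀ x ∈ s, D (q n) x < ε := by
  choose q hq using fun n : ℕ ↦ h (1 / (n + 1)) Nat.one_div_pos_of_nat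
  refine ⟨q, fun ε hε ↦ ?_⟩
  obtain ⟨N, hN⟩ := exists_nat_one_div_lt hε
  refine ⟨N, fun n hn x hx ↦ (hq n x hx).trans (lt_of_le_of_lt ?_ hN)⟩
  gcongr

lemma exists_mem_closedBall_norm_inv_one_sub_gt (M : ℝ) :
    ∃ z ∈ closedBall (0 : ℂ) 1 \ {1}, M < ‖(1 - z)⁻¹‖ := by
  set t : ℝ := (|M| + 1)⁻¹
  have ht₀ : 0 < t := by positivity
  have ht₁ : t ≤ 1 := inv_le_one_of_one_le₀ (by linarith [abs_nonneg M])
  refine ⟨1 - t, ⟨?_, ?_⟩, ?_⟩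
  · rw [mem_closedBall_zero_iff, ← ofReal_one, ← ofReal_sub, norm_real,
      Real.norm_of_nonneg (by linarith)]
    linarith
  · simpa using ht₀.ne'
  · rw [sub_sub_cancel, norm_inv, norm_real, Real.norm_of_nonneg ht₀.le, inv_inv]
    linarith [le_abs_self M]

lemma not_forall_norm_eval_sub_inv_one_sub_lt_one (q : ℂ[X]) :
    ¬ ∀ z ∈ closedBall (0 : ℂ) 1 \ {1}, ‖q.eval z - (1 - z)⁻¹‖ < 1 := by
  intro hq
  obtain ⟨M, hM⟩ := (isCompact_closedBall (0 : ℂ) 1).exists_bound_of_continuousOn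
    q.continuous.continuousOn
  obtain ⟨z, hz, hzM⟩ := exists_mem_closedBall_norm_inv_one_sub_gt (M + 1)
  have := norm_sub_norm_le (1 - z)⁻¹ (q.eval z)
  rw [norm_sub_rev] at this
  linarith [hq z hz, hM z hz.1]

/-- `1/(1−z)` (with value `∞` at `z = 1`) is a uniform limit of polynomials on
the closed unit disc for the chordal metric, but not for the Euclidean metric. -/
theorem stmt6 :
    (∃ p : ℕ → Polynomial ℂ, ∀ ε > (0 : ℝ), ∃ N : ℕ, ∀ n ≥ N,
        ∀ z ∈ closedBall (0 : ℂ) 1, chi ((p n).eval z : ℂ) (fext z) < ε) ∧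
    ¬ (∃ p : ℕ → Polynomial ℂ, ∀ ε > (0 : ℝ), ∃ N : ℕ, ∀ n ≥ N,
        ∀ z ∈ closedBall (0 : ℂ) 1 \ {1}, ‖(p n).eval z - (1 - z)⁻¹‖ < ε) := by
  refine ⟨exists_seq_forall_lt_of_forall_exists_lt fun ε ↦ exists_polynomial_chi_fext_lt, ?_⟩
  rintro ⟨p, hp⟩
  obtain ⟨N, hN⟩ := hp 1 one_pos
  exact not_forall_norm_eval_sub_inv_one_sub_lt_one (p N) (hN N le_rfl)
end

section
/- Let I be an uncountable set, (Y,d) a metric space, and f : D̄^I → Y continuous. Then f depends only on countably many coordinates: there is a countable set F ⊆ I such that f(z) = f(w) whenever z_i = w_i for all i ∈ F. -/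
/-!
On the compact set `D̄^I` the function `f` is uniformly continuous, and every entourage of the
product uniformity contains one that constrains only finitely many coordinates. So for each
member `U n` of a countable basis of entourages of `Y` there is a finite `F n ⊆ I` such that
agreement on `F n` puts `(f z, f w)` in `U n`; agreement on the countable set `⋃ n, F n` then
puts it in every entourage, which in a separated space forces `f z = f w`.
-/

open Metric Set Filter Uniformity

namespace UniformContinuousOn

variable {I : Type*} {X : I → Type*} [∀ i, UniformSpace (X i)] {Y : Type*} [UniformSpace Y]
  {f : (∀ i, X i) → Y} {S : Set (∀ i, X i)}

theorem exists_finite_forall_eq_imp_mem (hf : UniformContinuousOn f S) {U : Set (Y × Y)}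
    (hU : U ∈ 𝓤 Y) :
    ∃ F : Set I, F.Finite ∧ ∀ z ∈ S, ∀ w ∈ S, (∀ i ∈ F, z i = w i) → (f z, f w) ∈ U := by
  have hT := hf hU
  rw [mem_map, mem_inf_principal, Pi.uniformity, mem_iInf] at hT
  obtain ⟨F, hF, V, hV, hT⟩ := hT
  refine ⟨F, hF, fun z hz w hw hzw => ?_⟩
  have hmem : (z, w) ∈ ⋂ i, V i := mem_iInter.2 fun i => by
    obtain ⟨W, hW, hWV⟩ := mem_comap.1 (hV i)
    apply hWV
    change (z i, w i) ∈ W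
    rw [hzw i i.2]
    exact refl_mem_uniformity hW
  rw [← hT] at hmem
  exact hmem (mk_mem_prod hz hw)

theorem exists_countable_forall_eq_imp_eq [T0Space Y] [(𝓤 Y).IsCountablyGenerated]
    (hf : UniformContinuousOn f S) :
    ∃ F : Set I, F.Countable ∧ ∀ z ∈ S, ∀ w ∈ S, (∀ i ∈ F, z i = w i) → f z = f w := by
  obtain ⟨U, hU⟩ := (𝓤 Y).exists_antitone_basis
  choose F hF hFU using fun n => hf.exists_finite_forall_eq_imp_mem (hU.mem n)
  refine ⟨⋃ n, F n, countable_iUnion fun n => (hF n).countable, fun z hz w hw hzw => ?_⟩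
  exact eq_of_uniformity_basis hU.toHasBasis fun {n} _ =>
    hFU n z hz w hw fun i hi => hzw i (mem_iUnion_of_mem n hi)

end UniformContinuousOn

theorem stmt8_general {I : Type*} {Y : Type*} [MetricSpace Y]
    (f : (I → ℂ) → Y) (hf : ContinuousOn f {z : I → ℂ | ∀ i, z i ∈ closedBall (0 : ℂ) 1}) :
    ∃ F : Set I, F.Countable ∧
      ∀ z w : I → ℂ, (∀ i, z i ∈ closedBall (0 : ℂ) 1) → (∀ i, w i ∈ closedBall (0 : ℂ) 1) →
        (∀ i ∈ F, z i = w i) → f z = f w := by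
  have hcompact : IsCompact {z : I → ℂ | ∀ i, z i ∈ closedBall (0 : ℂ) 1} := by
    simpa only [Set.pi, mem_univ, true_imp_iff] using
      isCompact_univ_pi fun _ : I => isCompact_closedBall (0 : ℂ) 1
  obtain ⟨F, hF, hfF⟩ := UniformContinuousOn.exists_countable_forall_eq_imp_eq
    (hcompact.uniformContinuousOn_of_continuous hf)
  exact ⟨F, hF, fun z w hz hw => hfF z hz w hw⟩

/-- a continuous function on `D̄^I` (product topology) with `I` uncountable
depends only on countably many coordinates. -/
theorem stmt8 {I : Type*} [Uncountable I] {Y : Type*} [MetricSpace Y]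
    (f : (I → ℂ) → Y) (hf : ContinuousOn f {z : I → ℂ | ∀ i, z i ∈ closedBall (0 : ℂ) 1}) :
    ∃ F : Set I, F.Countable ∧
      ∀ z w : I → ℂ, (∀ i, z i ∈ closedBall (0 : ℂ) 1) → (∀ i, w i ∈ closedBall (0 : ℂ) 1) →
        (∀ i ∈ F, z i = w i) → f z = f w :=
  stmt8_general f hf
end

section
/- The function f(z,w) = (2zw − z − w)/(2 − z − w) on D̄² ∖ {(1,1)}, extended by f(1,1) = −1, is separately in the disc algebra in each variable (for each fixed value of the other variable in D̄), but f is not continuous on D̄² at the point (1,1); indeed f(e^{iθ}, e^{−iθ}) = 1 for all real θ while f(1,1) = −1. -/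
/-!
If `z + w = 2` with `z, w ∈ D̄`, strict convexity of the disc forces `z = w = 1`, so away from
`(1,1)` the denominator does not vanish on `D̄²`; and on the lines `z = 1`, `w = 1` the numerator is
minus the denominator. Hence every slice of `f` is a rational function without poles on `D̄` or the
constant `-1`. On the torus anti-diagonal `zw = 1` the numerator equals the denominator, so `f = 1`
at points `(e^{iθ}, e^{-iθ})` accumulating at `(1,1)`, where `f = -1`.
-/

open Complex Metric Set

/-- Knese's example: `f(z,w) = (2zw − z − w)/(2 − z − w)` on `D̄² ∖ {(1,1)}`,
extended by `f(1,1) = −1`. -/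
noncomputable def knese : ℂ × ℂ → ℂ := fun p =>
  if p = (1, 1) then -1 else (2 * p.1 * p.2 - p.1 - p.2) / (2 - p.1 - p.2)

open Filter Topology

theorem eq_of_norm_le_of_norm_add_eq {E : Type*} [NormedAddCommGroup E] [NormedSpace ℝ E]
    [StrictConvexSpace ℝ E] {x y : E} {r : ℝ} (hx : ‖x‖ ≤ r) (hy : ‖y‖ ≤ r)
    (h : ‖x + y‖ = 2 * r) : x = y := by
  have hxy := norm_add_le x y
  exact eq_of_norm_eq_of_norm_add_eq (by linarith) (by linarith)

theorem eq_one_of_norm_le_one_of_add_eq_two {z w : ℂ} (hz : ‖z‖ ≤ 1) (hw : ‖w‖ ≤ 1)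
    (h : z + w = 2) : z = 1 := by
  have hzw : z = w := eq_of_norm_le_of_norm_add_eq hz hw (by simp [h])
  subst hzw
  linear_combination h / 2

theorem eq_one_of_mul_eq_one_of_add_eq_two {R : Type*} [CommRing R] [IsReduced R] {z w : R}
    (hmul : z * w = 1) (hadd : z + w = 2) : z = 1 := by
  have hsq : (z - 1) ^ 2 = 0 := by linear_combination z * hadd - hmul
  exact sub_eq_zero.1 (IsReduced.eq_zero _ ⟨2, hsq⟩)

theorem knese_one_one : knese (1, 1) = -1 := if_pos rfl

theorem knese_swap (z w : ℂ) : knese (w, z) = knese (z, w) := by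
  simp only [knese, Prod.mk.injEq, and_comm]
  ring_nf

theorem knese_right_one (z : ℂ) : knese (z, 1) = -1 := by
  rcases eq_or_ne z 1 with rfl | hz
  · exact knese_one_one
  · have hden : (2 : ℂ) - z - 1 ≠ 0 := fun h => hz (by linear_combination -h)
    rw [knese, if_neg (by simp [hz]), div_eq_iff hden]
    ring

theorem knese_of_right_ne_one {w : ℂ} (hw : w ≠ 1) (z : ℂ) :
    knese (z, w) = (2 * z * w - z - w) / (2 - z - w) :=
  if_neg (by simp [hw])

theorem knese_eq_one_of_mul_eq_one {z w : ℂ} (hmul : z * w = 1) (hz : z ≠ 1) :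
    knese (z, w) = 1 := by
  have hden : (2 : ℂ) - z - w ≠ 0 := fun h =>
    hz (eq_one_of_mul_eq_one_of_add_eq_two hmul (by linear_combination -h))
  rw [knese, if_neg (by simp [hz]), div_eq_one_iff_eq hden]
  linear_combination 2 * hmul

theorem differentiableOn_knese_left {w : ℂ} (hw : w ∈ closedBall (0 : ℂ) 1) :
    DifferentiableOn ℂ (fun z => knese (z, w)) (closedBall 0 1) := by
  rcases eq_or_ne w 1 with rfl | hw1
  · simp only [knese_right_one]
    exact differentiableOn_const _
  · simp only [knese_of_right_ne_one hw1]
    refine DifferentiableOn.div (by fun_prop) (by fun_prop) fun z hz h => hw1 ?_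
    exact eq_one_of_norm_le_one_of_add_eq_two (mem_closedBall_zero_iff.1 hw)
      (mem_closedBall_zero_iff.1 hz) (by linear_combination -h)

theorem exp_ofReal_mul_I_ne_one {θ : ℝ} (hθ : θ ∈ Ioo 0 Real.pi) : exp (θ * I) ≠ 1 := fun h => by
  have him := congrArg Complex.im h
  rw [exp_ofReal_mul_I_im, one_im] at him
  exact (Real.sin_pos_of_pos_of_lt_pi hθ.1 hθ.2).ne' him

theorem not_continuousWithinAt_knese :
    ¬ ContinuousWithinAt knese (closedBall (0 : ℂ) 1 ×ˢ closedBall (0 : ℂ) 1) (1, 1) := by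
  intro hcont
  set γ : ℝ → ℂ × ℂ := fun θ => (exp (θ * I), exp (-θ * I))
  have hγ : Tendsto γ (𝓝[>] 0) (𝓝[closedBall 0 1 ×ˢ closedBall 0 1] (1, 1)) := by
    refine tendsto_nhdsWithin_iff.2 ⟨?_, Eventually.of_forall fun θ => ?_⟩
    · have hγ0 : γ 0 = (1, 1) := by simp [γ]
      exact hγ0 ▸ (Continuous.tendsto (by fun_prop) 0).mono_left nhdsWithin_le_nhds
    · simp [γ, ← ofReal_neg, norm_exp_ofReal_mul_I]
  have hγ_one : ∀ᶠ θ in 𝓝[>] 0, knese (γ θ) = 1 := by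
    filter_upwards [Ioo_mem_nhdsGT Real.pi_pos] with θ hθ
    exact knese_eq_one_of_mul_eq_one (by simp [← exp_add]) (exp_ofReal_mul_I_ne_one hθ)
  have h := tendsto_nhds_unique ((hcont.tendsto.comp hγ).congr' hγ_one) tendsto_const_nhds
  norm_num [knese_one_one] at h

/-- the function `knese` is separately in the disc algebra in each variable,
but is not continuous on `D̄²` at the point `(1,1)`; indeed `f(e^{iθ}, e^{−iθ}) = 1` for
all real `θ`, while `f(1,1) = −1`. -/
theorem stmt11 :
    (∀ w ∈ closedBall (0 : ℂ) 1,
        ContinuousOn (fun z => knese (z, w)) (closedBall (0 : ℂ) 1) ∧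
        DifferentiableOn ℂ (fun z => knese (z, w)) (ball (0 : ℂ) 1)) ∧
    (∀ z ∈ closedBall (0 : ℂ) 1,
        ContinuousOn (fun w => knese (z, w)) (closedBall (0 : ℂ) 1) ∧
        DifferentiableOn ℂ (fun w => knese (z, w)) (ball (0 : ℂ) 1)) ∧
    ¬ ContinuousWithinAt knese (closedBall (0 : ℂ) 1 ×ˢ closedBall (0 : ℂ) 1) (1, 1) ∧
    (∀ θ : ℝ, Complex.exp (θ * Complex.I) ≠ 1 →
        knese (Complex.exp (θ * Complex.I), Complex.exp (-θ * Complex.I)) = 1) ∧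
    knese (1, 1) = -1 := by
  have separately : ∀ w ∈ closedBall (0 : ℂ) 1,
      ContinuousOn (fun z => knese (z, w)) (closedBall (0 : ℂ) 1) ∧
      DifferentiableOn ℂ (fun z => knese (z, w)) (ball (0 : ℂ) 1) := fun w hw =>
    ⟨(differentiableOn_knese_left hw).continuousOn,
      (differentiableOn_knese_left hw).mono ball_subset_closedBall⟩
  refine ⟨separately, fun z hz => ?_, not_continuousWithinAt_knese,
    fun θ hθ => knese_eq_one_of_mul_eq_one (by simp [← exp_add]) hθ, knese_one_one⟩
  simpa only [knese_swap z] using separately z hz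
end

section
/- Let I be uncountable. A compact set K ⊆ T^I is a set of uniqueness for A(D̄^I) if and only if for every countably infinite subset F ⊆ I the projection of K onto T^F is a set of uniqueness for A(D̄^F). -/
open Complex Metric Set
attribute [local instance] Classical.propDecidable Classical.decEq

/-- Membership in `A(D̄^I)`: continuity on `D̄^I` for the product topology together with
separate membership in the disc algebra in each variable. -/
def MemPolydiscAlgebra {I : Type*} (f : (I → ℂ) → ℂ) : Prop :=
  ContinuousOn f {z : I → ℂ | ∀ i, z i ∈ closedBall (0 : ℂ) 1} ∧
  ∀ i₀ : I, ∀ z : I → ℂ, (∀ i, z i ∈ closedBall (0 : ℂ) 1) →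
    ContinuousOn (fun w => f (Function.update z i₀ w)) (closedBall (0 : ℂ) 1) ∧
    DifferentiableOn ℂ (fun w => f (Function.update z i₀ w)) (ball (0 : ℂ) 1)

/-- `K` is a set of uniqueness for `A(D̄^I)`. -/
def IsUniquenessSet {I : Type*} (K : Set (I → ℂ)) : Prop :=
  ∀ f g : (I → ℂ) → ℂ, MemPolydiscAlgebra f → MemPolydiscAlgebra g →
    EqOn f g K → EqOn f g {z : I → ℂ | ∀ i, z i ∈ closedBall (0 : ℂ) 1}

/-! A function continuous on the compact polydisc `D̄^I` is uniformly continuous, and every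
entourage of the product uniformity only constrains finitely many coordinates; so each member
of `A(D̄^I)` depends on countably many coordinates only. Given `f, g` agreeing on `K`, take a
countably infinite `F` containing the coordinates both depend on: then `f, g` factor through
the restriction to `F`, and their compositions with extension by zero lie in `A(D̄^F)` and agree
on the projection of `K`. Conversely, members of `A(D̄^F)` pull back along the restriction. -/

open scoped Uniformity

theorem Pi.exists_finite_forall_mem_of_mem_uniformity {ι : Type*} {α : ι → Type*}
    [∀ i, UniformSpace (α i)] {U : Set ((∀ i, α i) × (∀ i, α i))} (hU : U ∈ 𝓤 (∀ i, α i)) :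
    ∃ T : Set ι, T.Finite ∧ ∀ x y : ∀ i, α i, (∀ i ∈ T, x i = y i) → (x, y) ∈ U := by
  rw [Pi.uniformity, Filter.mem_iInf] at hU
  obtain ⟨T, hT, V, hV, rfl⟩ := hU
  refine ⟨T, hT, fun x y hxy => mem_iInter.2 fun i => ?_⟩
  obtain ⟨W, hW, hWV⟩ := Filter.mem_comap.1 (hV i)
  exact hWV (show (x i, y i) ∈ W from hxy i i.2 ▸ refl_mem_uniformity hW)

theorem IsCompact.exists_finite_coords_dist_lt {ι : Type*} {α : ι → Type*}
    [∀ i, UniformSpace (α i)] {β : Type*} [PseudoMetricSpace β] {s : Set (∀ i, α i)}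
    {f : (∀ i, α i) → β} (hs : IsCompact s) (hf : ContinuousOn f s) {ε : ℝ} (hε : 0 < ε) :
    ∃ T : Set ι, T.Finite ∧ ∀ x ∈ s, ∀ y ∈ s, (∀ i ∈ T, x i = y i) → dist (f x) (f y) < ε := by
  have hU := hs.uniformContinuousOn_of_continuous hf (dist_mem_uniformity hε)
  rw [Filter.mem_map, Filter.mem_inf_principal] at hU
  obtain ⟨T, hT, hTU⟩ := Pi.exists_finite_forall_mem_of_mem_uniformity hU
  exact ⟨T, hT, fun x hx y hy hxy => hTU x y hxy ⟨hx, hy⟩⟩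

theorem IsCompact.exists_countable_coords_determining {ι : Type*} {α : ι → Type*}
    [∀ i, UniformSpace (α i)] {β : Type*} [MetricSpace β] {s : Set (∀ i, α i)}
    {f : (∀ i, α i) → β} (hs : IsCompact s) (hf : ContinuousOn f s) :
    ∃ J : Set ι, J.Countable ∧ ∀ x ∈ s, ∀ y ∈ s, (∀ i ∈ J, x i = y i) → f x = f y := by
  choose T hT hTf using fun n : ℕ =>
    hs.exists_finite_coords_dist_lt hf (Nat.one_div_pos_of_nat (n := n))
  refine ⟨⋃ n, T n, countable_iUnion fun n => (hT n).countable, fun x hx y hy hxy => ?_⟩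
  by_contra hne
  obtain ⟨n, hn⟩ := exists_nat_one_div_lt (dist_pos.2 hne)
  exact (hTf n x hx y hy fun i hi => hxy i (mem_iUnion_of_mem n hi)).not_gt hn

def polydisc (I : Type*) : Set (I → ℂ) := {z | ∀ i, z i ∈ closedBall (0 : ℂ) 1}

theorem isCompact_polydisc (I : Type*) : IsCompact (polydisc I) := by
  simpa [polydisc, Set.pi] using isCompact_univ_pi fun _ : I => isCompact_closedBall (0 : ℂ) 1

section Restrict

variable {I : Type*} (F : Set I)

noncomputable def extendByZero (w : F → ℂ) : I → ℂ :=
  fun i => if h : i ∈ F then w ⟨i, h⟩ else 0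

theorem continuous_extendByZero : Continuous (extendByZero F) :=
  continuous_pi fun i => by
    by_cases h : i ∈ F
    · simpa only [extendByZero, h, dite_true] using continuous_apply _
    · simpa only [extendByZero, h, dite_false] using continuous_const

variable {F}

theorem extendByZero_mem_polydisc {w : F → ℂ} (hw : w ∈ polydisc F) :
    extendByZero F w ∈ polydisc I := by
  intro i
  by_cases h : i ∈ F
  · simpa only [extendByZero, h, dite_true] using hw ⟨i, h⟩
  · simp [extendByZero, h]

theorem domRestrict_mem_polydisc {z : I → ℂ} (hz : z ∈ polydisc I) :
    F.domRestrict z ∈ polydisc F :=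
  fun i => hz i

theorem domRestrict_extendByZero (w : F → ℂ) : F.domRestrict (extendByZero F w) = w := by
  funext i
  simp [extendByZero]

theorem extendByZero_domRestrict_apply {i : I} (hi : i ∈ F) (z : I → ℂ) :
    extendByZero F (F.domRestrict z) i = z i := by
  simp [extendByZero, hi]

-- The `DecidableEq` instances are implicit so that these rewrite lemmas unify with the
-- classical instances baked into `MemPolydiscAlgebra`, whatever instances they come with.
theorem extendByZero_update {_ : DecidableEq F} {_ : DecidableEq I} (w : F → ℂ) (i : F)
    (a : ℂ) :
    extendByZero F (Function.update w i a) = Function.update (extendByZero F w) i a := by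
  funext j
  by_cases hj : j ∈ F
  · by_cases hji : j = i
    · subst hji; simp [extendByZero, hj]
    · simp [extendByZero, hj, hji, Subtype.ext_iff]
  · have hji : j ≠ i := fun h => hj (h ▸ i.2)
    simp [extendByZero, hj, hji]

theorem domRestrict_update_of_mem {_ : DecidableEq I} {_ : DecidableEq F} {i : I} (hi : i ∈ F)
    (z : I → ℂ) (a : ℂ) :
    F.domRestrict (Function.update z i a) = Function.update (F.domRestrict z) ⟨i, hi⟩ a := by
  funext j
  simp [Function.update_apply, Subtype.ext_iff]

theorem domRestrict_update_of_notMem {_ : DecidableEq I} {i : I} (hi : i ∉ F) (z : I → ℂ)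
    (a : ℂ) :
    F.domRestrict (Function.update z i a) = F.domRestrict z := by
  funext j
  have hji : (j : I) ≠ i := fun h => hi (h ▸ j.2)
  simp [hji]

theorem MemPolydiscAlgebra.comp_extendByZero {f : (I → ℂ) → ℂ} (hf : MemPolydiscAlgebra f) :
    MemPolydiscAlgebra (f ∘ extendByZero F) := by
  refine ⟨hf.1.comp (continuous_extendByZero F).continuousOn
    fun w hw => extendByZero_mem_polydisc hw, fun i z hz => ?_⟩
  simpa only [Function.comp_def, extendByZero_update]
    using hf.2 i (extendByZero F z) (extendByZero_mem_polydisc hz)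

theorem MemPolydiscAlgebra.comp_domRestrict {g : (F → ℂ) → ℂ} (hg : MemPolydiscAlgebra g) :
    MemPolydiscAlgebra (g ∘ F.domRestrict) := by
  refine ⟨hg.1.comp (Pi.continuous_domRestrict F).continuousOn
    fun z hz => domRestrict_mem_polydisc hz, fun i z hz => ?_⟩
  by_cases hi : i ∈ F
  · simpa only [Function.comp_def, ← domRestrict_update_of_mem hi]
      using hg.2 ⟨i, hi⟩ (F.domRestrict z) (domRestrict_mem_polydisc hz)
  · simp only [Function.comp_def, domRestrict_update_of_notMem hi]
    exact ⟨continuousOn_const, differentiableOn_const _⟩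

end Restrict

section Uniqueness

variable {I : Type*}

theorem IsUniquenessSet.image_domRestrict {K : Set (I → ℂ)} (hK : IsUniquenessSet K)
    (F : Set I) :
    IsUniquenessSet (F.domRestrict '' K) := by
  intro f g hf hg hfg w hw
  have hfgK : EqOn (f ∘ F.domRestrict) (g ∘ F.domRestrict) K := fun z hz => hfg ⟨z, hz, rfl⟩
  simpa only [Function.comp_apply, domRestrict_extendByZero] using
    hK _ _ hf.comp_domRestrict hg.comp_domRestrict hfgK (extendByZero_mem_polydisc hw)

theorem eqOn_comp_extendByZero_domRestrict {f : (I → ℂ) → ℂ} {J F : Set I} (hJF : J ⊆ F)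
    (hJ : ∀ x ∈ polydisc I, ∀ y ∈ polydisc I, (∀ i ∈ J, x i = y i) → f x = f y) :
    EqOn (f ∘ extendByZero F ∘ F.domRestrict) f (polydisc I) := fun z hz =>
  hJ _ (extendByZero_mem_polydisc (domRestrict_mem_polydisc hz)) z hz
    fun _ hi => extendByZero_domRestrict_apply (hJF hi) z

theorem IsUniquenessSet.eqOn_polydisc_of_image_domRestrict {K : Set (I → ℂ)}
    (hK : K ⊆ polydisc I) {F : Set I} (hKF : IsUniquenessSet (F.domRestrict '' K))
    {f g : (I → ℂ) → ℂ} (hf : MemPolydiscAlgebra f) (hg : MemPolydiscAlgebra g)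
    (hfF : EqOn (f ∘ extendByZero F ∘ F.domRestrict) f (polydisc I))
    (hgF : EqOn (g ∘ extendByZero F ∘ F.domRestrict) g (polydisc I)) (hfg : EqOn f g K) :
    EqOn f g (polydisc I) := by
  have hFK : EqOn (f ∘ extendByZero F) (g ∘ extendByZero F) (F.domRestrict '' K) := by
    rintro _ ⟨z, hz, rfl⟩
    exact (hfF (hK hz)).trans ((hfg hz).trans (hgF (hK hz)).symm)
  intro z hz
  rw [← hfF hz, ← hgF hz]
  exact hKF _ _ hf.comp_extendByZero hg.comp_extendByZero hFK (domRestrict_mem_polydisc hz)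

theorem Set.Countable.exists_countable_infinite_superset [Infinite I] {J : Set I}
    (hJ : J.Countable) : ∃ F : Set I, J ⊆ F ∧ F.Countable ∧ F.Infinite :=
  let e := _root_.Infinite.natEmbedding I
  ⟨J ∪ range e, subset_union_left, hJ.union (countable_range e),
    (infinite_range_of_injective e.injective).mono subset_union_right⟩

end Uniqueness

theorem stmt16_general {I : Type*} [Uncountable I] (K : Set (I → ℂ))
    (hKT : K ⊆ {z : I → ℂ | ∀ i, z i ∈ sphere (0 : ℂ) 1}) :
    IsUniquenessSet K ↔
      ∀ F : Set I, F.Countable → F.Infinite →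
        IsUniquenessSet ((fun z (i : F) => z (i : I)) '' K) := by
  refine ⟨fun hK F _ _ => hK.image_domRestrict F, fun h f g hf hg hfg => ?_⟩
  obtain ⟨Jf, hJf, hf_dep⟩ := (isCompact_polydisc I).exists_countable_coords_determining hf.1
  obtain ⟨Jg, hJg, hg_dep⟩ := (isCompact_polydisc I).exists_countable_coords_determining hg.1
  obtain ⟨F, hJF, hF, hF_inf⟩ := (hJf.union hJg).exists_countable_infinite_superset
  have hKP : K ⊆ polydisc I := fun z hz i => sphere_subset_closedBall (hKT hz i)
  exact (h F hF hF_inf).eqOn_polydisc_of_image_domRestrict hKP hf hg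
    (eqOn_comp_extendByZero_domRestrict (subset_union_left.trans hJF) hf_dep)
    (eqOn_comp_extendByZero_domRestrict (subset_union_right.trans hJF) hg_dep) hfg

/-- for uncountable `I`, a compact `K ⊆ T^I` is a set of uniqueness for
`A(D̄^I)` if and only if for every countably infinite `F ⊆ I` the projection of `K` to
`T^F` is a set of uniqueness for `A(D̄^F)`. -/
theorem stmt16 {I : Type*} [Uncountable I] (K : Set (I → ℂ)) (hKc : IsCompact K)
    (hKT : K ⊆ {z : I → ℂ | ∀ i, z i ∈ sphere (0 : ℂ) 1}) :
    IsUniquenessSet K ↔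
      ∀ F : Set I, F.Countable → F.Infinite →
        IsUniquenessSet ((fun z (i : F) => z (i : I)) '' K) :=
  stmt16_general K hKT
end

section
/- Let I be a nonempty set with a partition (I_j)_{j∈J}, and for each j let K_j ⊆ T^{I_j} be a compact set of uniqueness for A(D̄^{I_j}). Then the product K = ∏_{j∈J} K_j ⊆ T^I is a set of uniqueness for A(D̄^I). -/
open Complex Metric Set
attribute [local instance] Classical.propDecidable Classical.decEq

/-!
Points of `D̄^I` all of whose blocks, except finitely many, lie in the corresponding `K_j` are
dense in `D̄^I`, so by continuity it suffices that `f = g` there. This goes by induction on the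
number of free blocks: freezing every coordinate outside the free block `I_{j₀}` turns `f` and
`g` into members of `A(D̄^{I_{j₀}})`, which agree on `K_{j₀}` by the induction hypothesis and
hence on the whole polydisc.
-/

open Function Filter Topology

section Glue

variable {I α : Type*} (S : Set I)

noncomputable def glue (z : I → α) (w : S → α) : I → α :=
  fun i => if h : i ∈ S then w ⟨i, h⟩ else z i

variable {S}

theorem glue_of_mem (z : I → α) (w : S → α) (i : S) : glue S z w i = w i := by
  simp [glue]

theorem glue_of_notMem (z : I → α) (w : S → α) {i : I} (hi : i ∉ S) : glue S z w i = z i := by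
  simp [glue, hi]

theorem glue_domRestrict (z : I → α) : glue S z (S.domRestrict z) = z := by
  ext i; by_cases hi : i ∈ S <;> simp [glue, hi, Set.domRestrict]

theorem domRestrict_glue (z : I → α) (w : S → α) : S.domRestrict (glue S z w) = w := by
  ext i; exact glue_of_mem z w i

theorem domRestrict_glue_of_disjoint {T : Set I} (hST : Disjoint S T) (z : I → α) (w : S → α) :
    T.domRestrict (glue S z w) = T.domRestrict z := by
  ext i; exact glue_of_notMem z w (hST.notMem_of_mem_right i.2)

theorem glue_update [DecidableEq I] [DecidableEq S] (z : I → α) (w : S → α) (i₀ : S) (u : α) :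
    glue S z (update w i₀ u) = update (glue S z w) i₀ u := by
  ext i
  by_cases hi : i ∈ S
  · lift i to S using hi
    simp only [glue_of_mem, update_apply, Subtype.ext_iff]
  · have hii₀ : i ≠ i₀ := fun h => hi (h ▸ i₀.2)
    simp [glue_of_notMem _ _ hi, hii₀]

theorem continuous_glue [TopologicalSpace α] (z : I → α) : Continuous (glue S z) := by
  refine continuous_pi fun i => ?_
  by_cases hi : i ∈ S
  · simpa [glue, hi] using continuous_apply (⟨i, hi⟩ : S)
  · simpa [glue, hi] using continuous_const

theorem glue_mem_of_forall_mem {B : Set α} {z : I → α} {w : S → α} (hz : ∀ i, z i ∈ B)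
    (hw : ∀ i, w i ∈ B) (i : I) : glue S z w i ∈ B := by
  unfold glue
  split_ifs
  exacts [hw _, hz i]

end Glue

theorem MemPolydiscAlgebra.comp_glue {I : Type*} {S : Set I} {f : (I → ℂ) → ℂ}
    (hf : MemPolydiscAlgebra f) {z : I → ℂ} (hz : ∀ i, z i ∈ closedBall (0 : ℂ) 1) :
    MemPolydiscAlgebra fun w : S → ℂ => f (glue S z w) := by
  refine ⟨hf.1.comp (continuous_glue z).continuousOn fun w hw => glue_mem_of_forall_mem hz hw,
    fun i₀ w hw => ?_⟩
  simp only [glue_update]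
  exact hf.2 i₀ _ (glue_mem_of_forall_mem hz hw)

theorem memPolydiscAlgebra_const {I : Type*} (c : ℂ) : MemPolydiscAlgebra fun _ : I → ℂ => c :=
  ⟨continuousOn_const, fun _ _ _ => ⟨continuousOn_const, differentiableOn_const c⟩⟩

theorem IsUniquenessSet.nonempty {I : Type*} {K : Set (I → ℂ)} (hK : IsUniquenessSet K) :
    K.Nonempty := by
  rw [nonempty_iff_ne_empty]
  rintro rfl
  exact zero_ne_one <| hK _ _ (memPolydiscAlgebra_const 0) (memPolydiscAlgebra_const 1)
    (by simp) (show (0 : I → ℂ) ∈ _ from fun _ => mem_closedBall_self zero_le_one)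

theorem IsUniquenessSet.eq_of_forall_glue_eq {I : Type*} {S : Set I} {K : Set (S → ℂ)}
    (hK : IsUniquenessSet K) {f g : (I → ℂ) → ℂ} (hf : MemPolydiscAlgebra f)
    (hg : MemPolydiscAlgebra g) {z : I → ℂ} (hz : ∀ i, z i ∈ closedBall (0 : ℂ) 1)
    (hfg : ∀ w ∈ K, f (glue S z w) = g (glue S z w)) : f z = g z := by
  have := hK _ _ (hf.comp_glue hz) (hg.comp_glue hz) hfg
    (show S.domRestrict z ∈ _ from fun i => hz i)
  simpa only [glue_domRestrict] using this

section Partition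

variable {I J α : Type*} {S : J → Set I}

theorem eq_of_forall_notMem_domRestrict_mem (hS : Pairwise (Disjoint on S))
    {K : ∀ j, Set (S j → ℂ)} (hK : ∀ j, IsUniquenessSet (K j))
    (hKD : ∀ j, ∀ w ∈ K j, ∀ i, w i ∈ closedBall (0 : ℂ) 1) {f g : (I → ℂ) → ℂ}
    (hf : MemPolydiscAlgebra f) (hg : MemPolydiscAlgebra g)
    (hfg : EqOn f g {z | ∀ j, (S j).domRestrict z ∈ K j}) (F : Finset J) {z : I → ℂ}
    (hz : ∀ i, z i ∈ closedBall (0 : ℂ) 1) (hzK : ∀ j ∉ F, (S j).domRestrict z ∈ K j) :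
    f z = g z := by
  induction F using Finset.induction_on generalizing z with
  | empty => exact hfg fun j => hzK j (Finset.notMem_empty j)
  | insert j₀ F _ ih =>
    refine (hK j₀).eq_of_forall_glue_eq hf hg hz fun w hw =>
      ih (glue_mem_of_forall_mem hz (hKD j₀ w hw)) fun j hj => ?_
    by_cases hj₀ : j = j₀
    · subst hj₀
      rwa [domRestrict_glue]
    · rw [domRestrict_glue_of_disjoint (hS (Ne.symm hj₀))]
      exact hzK j (by simp [hj, hj₀])

theorem Pairwise.liftCover_compat (hS : Pairwise (Disjoint on S)) (b : ∀ j, S j → α) (j j' : J)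
    (i : I) (hij : i ∈ S j) (hij' : i ∈ S j') : b j ⟨i, hij⟩ = b j' ⟨i, hij'⟩ := by
  obtain rfl : j = j' := by_contra fun hne => (hS hne).notMem_of_mem_left hij hij'
  rfl

theorem subset_closure_setOf_cofinite_domRestrict_mem [TopologicalSpace α]
    (hS : Pairwise (Disjoint on S)) (hcover : ⋃ j, S j = univ) {B : Set α}
    {K : ∀ j, Set (S j → α)} (hKB : ∀ j, ∀ w ∈ K j, ∀ i, w i ∈ B) (hK : ∀ j, (K j).Nonempty) :
    {z : I → α | ∀ i, z i ∈ B} ⊆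
      closure {z | (∀ i, z i ∈ B) ∧ ∃ F : Finset J, ∀ j ∉ F, (S j).domRestrict z ∈ K j} := by
  intro z hz
  choose k hk using hK
  let approx (F : Finset J) : I → α :=
    liftCover S (fun j => if j ∈ F then (S j).domRestrict z else k j) (hS.liftCover_compat _)
      hcover
  have block_of_mem {F : Finset J} {j : J} {i : I} (hij : i ∈ S j) :
      approx F i = if j ∈ F then z i else k j ⟨i, hij⟩ := by
    simp only [approx, liftCover_of_mem hij]
    split_ifs <;> rfl
  refine mem_closure_of_tendsto (b := atTop) (f := approx) ?_
    (Eventually.of_forall fun F => ⟨fun i => ?_, F, fun j hj => ?_⟩)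
  · refine tendsto_pi_nhds.2 fun i => ?_
    obtain ⟨j, hij⟩ := mem_iUnion.1 (hcover ▸ mem_univ i)
    refine tendsto_const_nhds.congr' ?_
    filter_upwards [eventually_ge_atTop {j}] with F hF
    rw [block_of_mem hij, if_pos (Finset.singleton_subset_iff.1 hF)]
  · obtain ⟨j, hij⟩ := mem_iUnion.1 (hcover ▸ mem_univ i)
    rw [block_of_mem hij]
    split_ifs
    exacts [hz i, hKB j _ (hk j) _]
  · convert hk j using 1
    ext ⟨i, hij⟩
    rw [domRestrict_apply, block_of_mem hij, if_neg hj]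

end Partition

theorem stmt18_general {I : Type*} {J : Type*} (Ipart : J → Set I)
    (hdisj : Pairwise (Function.onFun Disjoint Ipart)) (hcover : (⋃ j, Ipart j) = univ)
    (Kj : ∀ j : J, Set ((Ipart j) → ℂ))
    (hKT : ∀ j, Kj j ⊆ {z : (Ipart j) → ℂ | ∀ i, z i ∈ sphere (0 : ℂ) 1})
    (hKu : ∀ j, IsUniquenessSet (Kj j)) :
    IsUniquenessSet {z : I → ℂ | ∀ j : J, (fun i : Ipart j => z (i : I)) ∈ Kj j} := by
  have hKD : ∀ j, ∀ w ∈ Kj j, ∀ i, w i ∈ closedBall (0 : ℂ) 1 :=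
    fun j w hw i => sphere_subset_closedBall (hKT j hw i)
  intro f g hf hg hfg
  refine EqOn.of_subset_closure (fun z hz => ?_) hf.1 hg.1 (fun z hz => hz.1)
    (subset_closure_setOf_cofinite_domRestrict_mem hdisj hcover hKD fun j => (hKu j).nonempty)
  obtain ⟨hz, F, hzK⟩ := hz
  exact eq_of_forall_notMem_domRestrict_mem hdisj hKu hKD hf hg hfg F hz hzK

/-- if `(I_j)_{j∈J}` is a partition of a nonempty set `I` and for each `j`
the set `K_j ⊆ T^{I_j}` is a compact set of uniqueness for `A(D̄^{I_j})`, then the product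
`K = ∏_j K_j ⊆ T^I` is a set of uniqueness for `A(D̄^I)`. -/
theorem stmt18 {I : Type*} [Nonempty I] {J : Type*} (Ipart : J → Set I)
    (hdisj : Pairwise (Function.onFun Disjoint Ipart)) (hcover : (⋃ j, Ipart j) = univ)
    (Kj : ∀ j : J, Set ((Ipart j) → ℂ))
    (hKc : ∀ j, IsCompact (Kj j))
    (hKT : ∀ j, Kj j ⊆ {z : (Ipart j) → ℂ | ∀ i, z i ∈ sphere (0 : ℂ) 1})
    (hKu : ∀ j, IsUniquenessSet (Kj j)) :
    IsUniquenessSet {z : I → ℂ | ∀ j : J, (fun i : Ipart j => z (i : I)) ∈ Kj j} :=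
  stmt18_general Ipart hdisj hcover Kj hKT hKu
end

section
/- Let f : D̄ⁿ → ℂ ∪ {∞} be continuous, holomorphic on Dⁿ away from f^{-1}(∞), and suppose that for each coordinate direction and each fixed value of the other coordinates the resulting one-variable function belongs to the extended disc algebra Ã(D̄). If f(ζ) = ∞ for some ζ in the open polydisc Dⁿ, then f ≡ ∞ on D̄ⁿ. -/
open Complex Metric Set
attribute [local instance] Classical.propDecidable Classical.decEq

/-- The finite part of a point of the Riemann sphere `OnePoint ℂ` (junk value `0` at `∞`). -/
def OnePoint.toC : OnePoint ℂ → ℂ := fun x =>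
  match x with
  | (some a : Option ℂ) => a
  | (none : Option ℂ) => 0

/-- Membership in the extended disc algebra `Ã(D̄)`: either identically `∞` on the closed
unit disc, or continuous on `D̄` (as a map into the Riemann sphere), finite on the open
disc, and holomorphic there. -/
def MemAtildeDisc (g : ℂ → OnePoint ℂ) : Prop :=
  (∀ z ∈ closedBall (0 : ℂ) 1, g z = OnePoint.infty) ∨
  (ContinuousOn g (closedBall (0 : ℂ) 1) ∧
    (∀ z ∈ ball (0 : ℂ) 1, g z ≠ OnePoint.infty) ∧
    DifferentiableOn ℂ (fun z => (g z).toC) (ball (0 : ℂ) 1))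

/-! A slice function in `Ã(D̄)` that takes the value `∞` somewhere in the open disc is `≡ ∞` on
`D̄`. Starting from `ζ`, replace its coordinates by those of `z` one at a time: before each
replacement the current point still has an old coordinate of `ζ`, which lies in the open disc,
so `f = ∞` propagates along the whole slice and in particular to the next point. -/

theorem holds_of_propagates_along_coordinates {ι α : Type*} [Finite ι] [DecidableEq ι]
    {s t : Set α} {P : (ι → α) → Prop} (hts : t ⊆ s)
    (hstep : ∀ k (x : ι → α), (∀ i, x i ∈ s) → x k ∈ t → P x →
      ∀ w ∈ s, P (Function.update x k w))
    {ζ : ι → α} (hζ : ∀ i, ζ i ∈ t) (hPζ : P ζ) {z : ι → α} (hz : ∀ i, z i ∈ s) : P z := by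
  have := Fintype.ofFinite ι
  suffices ∀ F : Finset ι, P (F.piecewise z ζ) by simpa using this Finset.univ
  intro F
  induction F using Finset.induction_on with
  | empty => simpa using hPζ
  | insert k F hk ih =>
    rw [Finset.piecewise_insert]
    have hbox : ∀ i, F.piecewise z ζ i ∈ s := fun i => by
      by_cases hi : i ∈ F
      · simpa [hi] using hz i
      · simpa [hi] using hts (hζ i)
    exact hstep k _ hbox (by simpa [hk] using hζ k) ih (z k) (hz k)

theorem MemAtildeDisc.eq_infty_of_eq_infty_of_mem_ball {g : ℂ → OnePoint ℂ}
    (hg : MemAtildeDisc g) {w : ℂ} (hw : w ∈ ball (0 : ℂ) 1) (hgw : g w = OnePoint.infty) :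
    ∀ z ∈ closedBall (0 : ℂ) 1, g z = OnePoint.infty :=
  hg.resolve_right fun h => h.2.1 w hw hgw

theorem stmt19_general (n : ℕ) (f : (Fin n → ℂ) → OnePoint ℂ)
    (hsep : ∀ k : Fin n, ∀ z : Fin n → ℂ, (∀ i, z i ∈ closedBall (0 : ℂ) 1) →
      MemAtildeDisc (fun w => f (Function.update z k w)))
    (ζ : Fin n → ℂ) (hζ : ∀ i, ζ i ∈ ball (0 : ℂ) 1) (hzinf : f ζ = OnePoint.infty) :
    ∀ z : Fin n → ℂ, (∀ i, z i ∈ closedBall (0 : ℂ) 1) → f z = OnePoint.infty := by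
  intro z hz
  refine holds_of_propagates_along_coordinates (P := fun x => f x = OnePoint.infty)
    ball_subset_closedBall ?_ hζ hzinf hz
  intro k x hx hxk hfx
  exact (hsep k x hx).eq_infty_of_eq_infty_of_mem_ball hxk (by simpa using hfx)

/-- if `f : D̄ⁿ → ℂ ∪ {∞}` is continuous, holomorphic on `Dⁿ` away from
`f⁻¹(∞)`, and separately in `Ã(D̄)` in each variable, and `f(ζ) = ∞` for some `ζ` in the
open polydisc, then `f ≡ ∞` on `D̄ⁿ`. -/
theorem stmt19 (n : ℕ) (f : (Fin n → ℂ) → OnePoint ℂ)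
    (hf : ContinuousOn f {z : Fin n → ℂ | ∀ i, z i ∈ closedBall (0 : ℂ) 1})
    (hf' : DifferentiableOn ℂ (fun z => (f z).toC)
      {z : Fin n → ℂ | (∀ i, z i ∈ ball (0 : ℂ) 1) ∧ f z ≠ OnePoint.infty})
    (hsep : ∀ k : Fin n, ∀ z : Fin n → ℂ, (∀ i, z i ∈ closedBall (0 : ℂ) 1) →
      MemAtildeDisc (fun w => f (Function.update z k w)))
    (ζ : Fin n → ℂ) (hζ : ∀ i, ζ i ∈ ball (0 : ℂ) 1) (hzinf : f ζ = OnePoint.infty) :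
    ∀ z : Fin n → ℂ, (∀ i, z i ∈ closedBall (0 : ℂ) 1) → f z = OnePoint.infty :=
  stmt19_general n f hsep ζ hζ hzinf
end
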